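/- If n is even, then the polynomial q_n(λ) − λ·q_{n-1}(λ) has degree n/2 − 1 and all its coefficients are positive, where q_n is the matching generating polynomial of K_n. -/

import Mathlib

open Finset SimpleGraph

noncomputable section

/-- `M` is a matching of `G`: a finset of edges of `G`, pairwise vertex-disjoint. -/
def IsMatchingSet {V : Type*} (G : SimpleGraph V) (M : Finset (Sym2 V)) : Prop :=
  (∀ e ∈ M, e ∈ G.edgeSet) ∧
    ∀ e ∈ M, ∀ f ∈ M, e ≠ f → ∀ v : V, ¬(v ∈ e ∧ v ∈ f)

/-- The finset of all matchings of `G`. -/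
def matchingsOf {V : Type*} [Fintype V] (G : SimpleGraph V) : Finset (Finset (Sym2 V)) := by
  classical exact Finset.univ.filter fun M => IsMatchingSet G M

/-- `m_k(G)`: the number of matchings of size `k` in `G`. -/
def mCount {V : Type*} [Fintype V] (G : SimpleGraph V) (k : ℕ) : ℕ := by
  classical exact ((matchingsOf G).filter fun M => M.card = k).card

/-- The matching generating polynomial (partition function) `M_G(λ) = ∑_M λ^{|M|}`. -/
def matchingGen {V : Type*} [Fintype V] (G : SimpleGraph V) (lam : ℝ) : ℝ :=
  ∑ M ∈ matchingsOf G, lam ^ M.card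

/-- `q n` : the matching generating polynomial of the complete graph `K_n`. -/
def q (n : ℕ) (lam : ℝ) : ℝ := matchingGen (⊤ : SimpleGraph (Fin n)) lam

/-- The matching generating polynomial of `K_n` as a polynomial. -/
def qPoly (n : ℕ) : Polynomial ℝ :=
  ∑ M ∈ matchingsOf (⊤ : SimpleGraph (Fin n)), Polynomial.X ^ M.card

/-!
Sort the `(r+1)`-matchings of `K_{m+1}` by whether they cover the last vertex. Those that do not
are the `(r+1)`-matchings of `K_m`; those that do are obtained exactly once from an `r`-matching
`N` of `K_m` by joining one of the `m - 2r` vertices uncovered by `N` to the last vertex. Hence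
`m_{r+1}(K_{m+1}) = m_{r+1}(K_m) + (m - 2r) m_r(K_m)`, and `m_r(K_m) > 0` exactly when `2r ≤ m`.
For `n = m + 1` the coefficient of `λ^{r+1}` in `q_n - λ q_{n-1}` is therefore
`m_{r+1}(K_m) + (m - 2r - 1) m_r(K_m)`; when `m = n - 1` is odd, this is positive for
`r + 1 < n/2` and vanishes for `r + 1 ≥ n/2`.
-/

section Matching

variable {V W : Type*} {G H : SimpleGraph V} {M : Finset (Sym2 V)}

lemma mem_matchingsOf [Fintype V] : M ∈ matchingsOf G ↔ IsMatchingSet G M := by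
  simp [matchingsOf]

lemma mCount_eq_card_filter [Fintype V] (G : SimpleGraph V) (k : ℕ) :
    mCount G k = #{M ∈ matchingsOf G | #M = k} :=
  rfl

lemma isMatchingSet_empty (G : SimpleGraph V) : IsMatchingSet G ∅ := by
  simp [IsMatchingSet]

lemma IsMatchingSet.mono (hM : IsMatchingSet G M) (hGH : G ≤ H) : IsMatchingSet H M :=
  ⟨fun e he => edgeSet_mono hGH (hM.1 e he), hM.2⟩

lemma IsMatchingSet.map (f : V ↪ W) (hM : IsMatchingSet G M) :
    IsMatchingSet (G.map f) (M.map f.sym2Map) := by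
  refine ⟨?_, ?_⟩
  · simp only [Finset.mem_map, edgeSet_map]
    rintro _ ⟨e, he, rfl⟩
    exact ⟨e, hM.1 e he, rfl⟩
  · simp only [Finset.mem_map]
    rintro _ ⟨e, he, rfl⟩ _ ⟨f', hf', rfl⟩ hne w ⟨hwe, hwf⟩
    obtain ⟨v, hve, rfl⟩ := Sym2.mem_map.mp hwe
    obtain ⟨v', hvf, hvv'⟩ := Sym2.mem_map.mp hwf
    rw [f.injective hvv'] at hvf
    exact hM.2 e he f' hf' (fun h => hne (h ▸ rfl)) v ⟨hve, hvf⟩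

lemma IsMatchingSet.preimage (f : W ↪ V) (hM : IsMatchingSet G M) :
    IsMatchingSet (G.comap f) (M.preimage f.sym2Map f.sym2Map.injective.injOn) := by
  refine ⟨?_, ?_⟩
  · intro e he
    induction e using Sym2.ind
    simpa using hM.1 _ (Finset.mem_preimage.mp he)
  · intro e he e' he' hne w ⟨hwe, hwe'⟩
    refine hM.2 _ (Finset.mem_preimage.mp he) _ (Finset.mem_preimage.mp he')
      (fun h => hne (f.sym2Map.injective h)) (f w) ⟨?_, ?_⟩ <;>
      exact Sym2.mem_map.mpr ⟨w, by assumption, rfl⟩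

section DecidableEq

variable [DecidableEq V]

lemma IsMatchingSet.insert {e : Sym2 V} (hM : IsMatchingSet G M) (he : e ∈ G.edgeSet)
    (hdisj : ∀ f ∈ M, ∀ v ∈ e, v ∉ f) : IsMatchingSet G (insert e M) := by
  refine ⟨fun f hf => ?_, fun f hf f' hf' hne v ⟨hvf, hvf'⟩ => ?_⟩
  · rcases Finset.mem_insert.mp hf with rfl | hf
    exacts [he, hM.1 f hf]
  · rcases Finset.mem_insert.mp hf with rfl | hfM <;>
      rcases Finset.mem_insert.mp hf' with rfl | hf'M
    exacts [hne rfl, hdisj f' hf'M v hvf hvf', hdisj f hfM v hvf' hvf,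
      hM.2 f hfM f' hf'M hne v ⟨hvf, hvf'⟩]

def verts (M : Finset (Sym2 V)) : Finset V := M.biUnion Sym2.toFinset

lemma mem_verts {v : V} : v ∈ verts M ↔ ∃ e ∈ M, v ∈ e := by
  simp [verts]

lemma IsMatchingSet.card_verts (hM : IsMatchingSet G M) : #(verts M) = 2 * #M := by
  rw [verts, card_biUnion, Finset.sum_congr rfl fun e he =>
    Sym2.card_toFinset_of_not_isDiag e (G.not_isDiag_of_mem_edgeSet (hM.1 e he))]
  · simp [mul_comm]
  · intro e he e' he' hne
    simp only [Function.onFun, Finset.disjoint_left, Sym2.mem_toFinset]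
    exact fun v hv hv' => hM.2 e he e' he' hne v ⟨hv, hv'⟩

end DecidableEq

lemma IsMatchingSet.two_mul_card_le [Fintype V] (hM : IsMatchingSet G M) :
    2 * #M ≤ Fintype.card V := by
  classical
  exact hM.card_verts ▸ card_le_univ _

lemma mCount_zero [Fintype V] : mCount G 0 = 1 := by
  rw [mCount_eq_card_filter, Finset.card_eq_one]
  refine ⟨∅, Finset.eq_singleton_iff_unique_mem.mpr ⟨?_, ?_⟩⟩
  · simpa [mem_matchingsOf] using isMatchingSet_empty G
  · simp

lemma mCount_eq_zero [Fintype V] {k : ℕ} (hk : Fintype.card V < 2 * k) : mCount G k = 0 := by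
  rw [mCount_eq_card_filter, Finset.card_eq_zero, Finset.filter_eq_empty_iff]
  rintro M hM rfl
  exact (mem_matchingsOf.mp hM).two_mul_card_le.not_gt hk

end Matching

section LastVertex

variable {m : ℕ}

lemma last_notMem_sym2Map_castSucc (e : Sym2 (Fin m)) :
    Fin.last m ∉ Fin.castSuccEmb.sym2Map e := by
  simp [Sym2.mem_map, Fin.castSucc_ne_last]

lemma castSucc_mem_sym2Map_castSucc {a : Fin m} {e : Sym2 (Fin m)} :
    a.castSucc ∈ Fin.castSuccEmb.sym2Map e ↔ a ∈ e := by
  simp [Sym2.mem_map]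

lemma exists_sym2Map_castSucc_eq {f : Sym2 (Fin (m + 1))} (hf : Fin.last m ∉ f) :
    ∃ g, Fin.castSuccEmb.sym2Map g = f := by
  induction f using Sym2.ind with | _ a b => ?_
  obtain ⟨a, rfl⟩ := Fin.eq_castSucc_of_ne_last (x := a) (by rintro rfl; simp at hf)
  obtain ⟨b, rfl⟩ := Fin.eq_castSucc_of_ne_last (x := b) (by rintro rfl; simp at hf)
  exact ⟨s(a, b), rfl⟩

def extendLast (N : Finset (Sym2 (Fin m))) (v : Fin m) : Finset (Sym2 (Fin (m + 1))) :=
  insert s(v.castSucc, Fin.last m) (N.map Fin.castSuccEmb.sym2Map)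

def restrictLast (M : Finset (Sym2 (Fin (m + 1)))) : Finset (Sym2 (Fin m)) :=
  M.preimage Fin.castSuccEmb.sym2Map Fin.castSuccEmb.sym2Map.injective.injOn

lemma restrictLast_map (N : Finset (Sym2 (Fin m))) :
    restrictLast (N.map Fin.castSuccEmb.sym2Map) = N :=
  Finset.preimage_map _ _

lemma map_restrictLast (M : Finset (Sym2 (Fin (m + 1)))) :
    (restrictLast M).map Fin.castSuccEmb.sym2Map = {f ∈ M | Fin.last m ∉ f} := by
  ext f
  simp only [restrictLast, Finset.mem_map, Finset.mem_preimage, Finset.mem_filter]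
  constructor
  · rintro ⟨g, hg, rfl⟩
    exact ⟨hg, last_notMem_sym2Map_castSucc g⟩
  · rintro ⟨hf, hlast⟩
    obtain ⟨g, rfl⟩ := exists_sym2Map_castSucc_eq hlast
    exact ⟨g, hf, rfl⟩

lemma map_restrictLast_of_last_notMem_verts {M : Finset (Sym2 (Fin (m + 1)))}
    (h : Fin.last m ∉ verts M) : (restrictLast M).map Fin.castSuccEmb.sym2Map = M := by
  rw [map_restrictLast, Finset.filter_true_of_mem]
  exact fun f hf hlast => h (mem_verts.mpr ⟨f, hf, hlast⟩)

lemma edge_last_notMem_map (N : Finset (Sym2 (Fin m))) (v : Fin m) :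
    s(v.castSucc, Fin.last m) ∉ N.map Fin.castSuccEmb.sym2Map := by
  rw [Finset.mem_map]
  rintro ⟨g, -, hg⟩
  exact last_notMem_sym2Map_castSucc g (hg ▸ Sym2.mem_mk_right _ _)

lemma restrictLast_extendLast (N : Finset (Sym2 (Fin m))) (v : Fin m) :
    restrictLast (extendLast N v) = N := by
  ext g
  rw [restrictLast, Finset.mem_preimage, extendLast, Finset.mem_insert, Finset.mem_map']
  exact or_iff_right fun h => last_notMem_sym2Map_castSucc g (h ▸ Sym2.mem_mk_right _ _)

lemma card_extendLast (N : Finset (Sym2 (Fin m))) (v : Fin m) : #(extendLast N v) = #N + 1 := by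
  rw [extendLast, Finset.card_insert_of_notMem (edge_last_notMem_map N v), Finset.card_map]

lemma last_mem_verts_extendLast (N : Finset (Sym2 (Fin m))) (v : Fin m) :
    Fin.last m ∈ verts (extendLast N v) :=
  mem_verts.mpr ⟨_, Finset.mem_insert_self _ _, Sym2.mem_mk_right _ _⟩

lemma extendLast_inj {N N' : Finset (Sym2 (Fin m))} {v v' : Fin m}
    (h : extendLast N v = extendLast N' v') : N = N' ∧ v = v' := by
  refine ⟨by rw [← restrictLast_extendLast N v, h, restrictLast_extendLast], ?_⟩
  have hmem : s(v.castSucc, Fin.last m) ∈ extendLast N' v' := h ▸ Finset.mem_insert_self _ _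
  rcases Finset.mem_insert.mp hmem with heq | hmap
  · exact Fin.castSucc_injective m (Sym2.congr_left.mp heq)
  · exact absurd hmap (edge_last_notMem_map N' v)

lemma isMatchingSet_extendLast {N : Finset (Sym2 (Fin m))} {v : Fin m}
    (hN : IsMatchingSet ⊤ N) (hv : v ∉ verts N) : IsMatchingSet ⊤ (extendLast N v) := by
  refine ((hN.map Fin.castSuccEmb).mono le_top).insert (by simp [Fin.castSucc_ne_last]) ?_
  simp only [Finset.mem_map, Sym2.mem_iff]
  rintro _ ⟨g, hg, rfl⟩ w (rfl | rfl)
  · exact fun h => hv (mem_verts.mpr ⟨g, hg, castSucc_mem_sym2Map_castSucc.mp h⟩)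
  · exact last_notMem_sym2Map_castSucc g

lemma isMatchingSet_restrictLast {M : Finset (Sym2 (Fin (m + 1)))} (hM : IsMatchingSet ⊤ M) :
    IsMatchingSet ⊤ (restrictLast M) := by
  have := hM.preimage Fin.castSuccEmb
  rwa [comap_top Fin.castSuccEmb.injective] at this

lemma IsMatchingSet.exists_extendLast_restrictLast_eq {M : Finset (Sym2 (Fin (m + 1)))}
    (hM : IsMatchingSet ⊤ M) (hlast : Fin.last m ∈ verts M) :
    ∃ v ∉ verts (restrictLast M), extendLast (restrictLast M) v = M := by
  obtain ⟨e, he, hle⟩ := mem_verts.mp hlast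
  obtain ⟨c, rfl⟩ := Sym2.mem_iff_exists.mp hle
  obtain ⟨v, rfl⟩ := Fin.eq_castSucc_of_ne_last (x := c) fun hc => by
    simpa [hc] using hM.1 _ he
  rw [Sym2.eq_swap] at he
  have huniq : ∀ f ∈ M, Fin.last m ∈ f → f = s(v.castSucc, Fin.last m) := fun f hf hl =>
    by_contra fun hne => hM.2 f hf _ he hne _ ⟨hl, Sym2.mem_mk_right _ _⟩
  refine ⟨v, fun hv => ?_, ?_⟩
  · obtain ⟨g, hg, hvg⟩ := mem_verts.mp hv
    exact hM.2 _ (Finset.mem_preimage.mp hg) _ he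
      (fun h => last_notMem_sym2Map_castSucc g (h ▸ Sym2.mem_mk_right _ _)) _
      ⟨castSucc_mem_sym2Map_castSucc.mpr hvg, Sym2.mem_mk_left _ _⟩
  · ext f
    rw [extendLast, map_restrictLast, Finset.mem_insert, Finset.mem_filter]
    refine ⟨?_, fun hf => (em _).imp (huniq f hf) (⟨hf, ·⟩)⟩
    rintro (rfl | ⟨hf, -⟩)
    exacts [he, hf]

lemma card_filter_last_notMem_verts (r : ℕ) :
    #{M ∈ matchingsOf (⊤ : SimpleGraph (Fin (m + 1))) | #M = r ∧ Fin.last m ∉ verts M} =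
      mCount (⊤ : SimpleGraph (Fin m)) r := by
  rw [mCount_eq_card_filter]
  symm
  refine Finset.card_nbij' (·.map Fin.castSuccEmb.sym2Map) restrictLast ?_ ?_
    (fun N _ => restrictLast_map N) fun M hM =>
      map_restrictLast_of_last_notMem_verts (Finset.mem_filter.mp hM).2.2
  · intro N hN
    obtain ⟨hNm, rfl⟩ := Finset.mem_filter.mp hN
    refine Finset.mem_filter.mpr ⟨?_, Finset.card_map _, fun h => ?_⟩
    · exact mem_matchingsOf.mpr (((mem_matchingsOf.mp hNm).map _).mono le_top)
    · obtain ⟨_, hf, hlast⟩ := mem_verts.mp h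
      obtain ⟨g, -, rfl⟩ := Finset.mem_map.mp hf
      exact last_notMem_sym2Map_castSucc g hlast
  · intro M hM
    obtain ⟨hMm, rfl, hlast⟩ := Finset.mem_filter.mp hM
    refine Finset.mem_filter.mpr
      ⟨mem_matchingsOf.mpr (isMatchingSet_restrictLast (mem_matchingsOf.mp hMm)), ?_⟩
    rw [← Finset.card_map Fin.castSuccEmb.sym2Map, map_restrictLast_of_last_notMem_verts hlast]

lemma card_filter_last_mem_verts (r : ℕ) :
    #{M ∈ matchingsOf (⊤ : SimpleGraph (Fin (m + 1))) | #M = r + 1 ∧ Fin.last m ∈ verts M} =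
      (m - 2 * r) * mCount (⊤ : SimpleGraph (Fin m)) r := by
  set S := {N ∈ matchingsOf (⊤ : SimpleGraph (Fin m)) | #N = r}
  have hsigma : #(S.sigma fun N => Finset.univ \ verts N) =
      #{M ∈ matchingsOf (⊤ : SimpleGraph (Fin (m + 1))) |
        #M = r + 1 ∧ Fin.last m ∈ verts M} := by
    refine Finset.card_bij (fun p _ => extendLast p.1 p.2) ?_ ?_ ?_
    · rintro ⟨N, v⟩ hp
      obtain ⟨hN, hv⟩ := Finset.mem_sigma.mp hp
      obtain ⟨hNm, rfl⟩ := Finset.mem_filter.mp hN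
      refine Finset.mem_filter.mpr ⟨mem_matchingsOf.mpr ?_, card_extendLast N v,
        last_mem_verts_extendLast N v⟩
      exact isMatchingSet_extendLast (mem_matchingsOf.mp hNm) (Finset.mem_sdiff.mp hv).2
    · rintro ⟨N, v⟩ - ⟨N', v'⟩ - h
      obtain ⟨rfl, rfl⟩ := extendLast_inj h
      rfl
    · intro M hM
      obtain ⟨hMm, hcard, hlast⟩ := Finset.mem_filter.mp hM
      obtain ⟨v, hv, hext⟩ := (mem_matchingsOf.mp hMm).exists_extendLast_restrictLast_eq hlast
      refine ⟨⟨restrictLast M, v⟩, Finset.mem_sigma.mpr ⟨Finset.mem_filter.mpr ⟨?_, ?_⟩,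
        Finset.mem_sdiff.mpr ⟨Finset.mem_univ _, hv⟩⟩, hext⟩
      · exact mem_matchingsOf.mpr (isMatchingSet_restrictLast (mem_matchingsOf.mp hMm))
      · change #(restrictLast M) = r
        have := card_extendLast (restrictLast M) v
        rw [hext] at this
        omega
  rw [← hsigma, Finset.card_sigma, mCount_eq_card_filter, mul_comm]
  refine Finset.sum_const_nat fun N hN => ?_
  obtain ⟨hNm, rfl⟩ := Finset.mem_filter.mp hN
  rw [Finset.card_univ_sdiff, (mem_matchingsOf.mp hNm).card_verts, Fintype.card_fin]

lemma mCount_top_succ_succ (r : ℕ) :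
    mCount (⊤ : SimpleGraph (Fin (m + 1))) (r + 1) =
      mCount (⊤ : SimpleGraph (Fin m)) (r + 1) +
        (m - 2 * r) * mCount (⊤ : SimpleGraph (Fin m)) r := by
  rw [mCount_eq_card_filter (⊤ : SimpleGraph (Fin (m + 1))),
    ← Finset.card_filter_add_card_filter_not (fun M => Fin.last m ∈ verts M),
    Finset.filter_filter, Finset.filter_filter, card_filter_last_mem_verts,
    card_filter_last_notMem_verts, add_comm]

end LastVertex

lemma mCount_top_pos {m r : ℕ} (h : 2 * r ≤ m) : 0 < mCount (⊤ : SimpleGraph (Fin m)) r := by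
  induction r generalizing m with
  | zero => simp [mCount_zero]
  | succ r ih =>
    obtain ⟨m, rfl⟩ : ∃ k, m = k + 1 := ⟨m - 1, by omega⟩
    rw [mCount_top_succ_succ]
    exact Nat.add_pos_right _ (Nat.mul_pos (by omega) (ih (by omega)))

section Polynomial

open Polynomial

lemma coeff_qPoly (n r : ℕ) : (qPoly n).coeff r = mCount (⊤ : SimpleGraph (Fin n)) r := by
  simp [qPoly, coeff_X_pow, mCount_eq_card_filter, eq_comm]

lemma coeff_zero_qPoly_succ_sub_X_mul (m : ℕ) : (qPoly (m + 1) - X * qPoly m).coeff 0 = 1 := by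
  simp [coeff_qPoly, mCount_zero]

lemma coeff_succ_qPoly_succ_sub_X_mul (m r : ℕ) :
    (qPoly (m + 1) - X * qPoly m).coeff (r + 1) =
      mCount (⊤ : SimpleGraph (Fin m)) (r + 1) +
        ((m : ℝ) - 2 * r - 1) * mCount (⊤ : SimpleGraph (Fin m)) r := by
  rw [coeff_sub, coeff_X_mul, coeff_qPoly, coeff_qPoly, mCount_top_succ_succ]
  rcases le_or_gt (2 * r) m with h | h
  · push_cast [Nat.cast_sub h]
    ring
  · rw [mCount_eq_zero (k := r) (by rwa [Fintype.card_fin]),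
      mCount_eq_zero (k := r + 1) (by rw [Fintype.card_fin]; omega)]
    simp

lemma coeff_qPoly_sub_X_mul_pos {t k : ℕ} (hk : k ≤ t) :
    0 < (qPoly (2 * t + 1 + 1) - X * qPoly (2 * t + 1)).coeff k := by
  cases k with
  | zero => simp only [coeff_zero_qPoly_succ_sub_X_mul, zero_lt_one]
  | succ r =>
    rw [coeff_succ_qPoly_succ_sub_X_mul]
    have hpos : (0 : ℝ) < mCount (⊤ : SimpleGraph (Fin (2 * t + 1))) (r + 1) := by
      exact_mod_cast mCount_top_pos (by omega)
    have hfactor : (0 : ℝ) ≤ ((2 * t + 1 : ℕ) : ℝ) - 2 * r - 1 := by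
      have : (r : ℝ) + 1 ≤ t := by exact_mod_cast hk
      push_cast
      linarith
    exact add_pos_of_pos_of_nonneg hpos (mul_nonneg hfactor (Nat.cast_nonneg _))

lemma coeff_qPoly_sub_X_mul_eq_zero {t k : ℕ} (hk : t < k) :
    (qPoly (2 * t + 1 + 1) - X * qPoly (2 * t + 1)).coeff k = 0 := by
  obtain ⟨r, rfl⟩ : ∃ r, k = r + 1 := ⟨k - 1, by omega⟩
  rw [coeff_succ_qPoly_succ_sub_X_mul, mCount_eq_zero (by rw [Fintype.card_fin]; omega),
    Nat.cast_zero, zero_add]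
  rcases (by omega : r = t ∨ t < r) with rfl | hr
  · push_cast
    ring
  · rw [mCount_eq_zero (by rw [Fintype.card_fin]; omega)]
    simp

end Polynomial

/-- if `n` is even (and positive), then `q_n(λ) − λ·q_{n-1}(λ)` has
degree `n/2 − 1` and all its coefficients are positive. -/
theorem qPoly_sub_X_mul_coeff_pos (n : ℕ) (hn : 0 < n) (hev : Even n) :
    (qPoly n - Polynomial.X * qPoly (n - 1)).natDegree = n / 2 - 1 ∧
      ∀ r ≤ n / 2 - 1, 0 < (qPoly n - Polynomial.X * qPoly (n - 1)).coeff r := by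
  obtain ⟨t, rfl⟩ : ∃ t, n = 2 * t + 1 + 1 := by
    obtain ⟨s, rfl⟩ := hev
    exact ⟨s - 1, by omega⟩
  rw [show 2 * t + 1 + 1 - 1 = 2 * t + 1 from rfl, show (2 * t + 1 + 1) / 2 - 1 = t by omega]
  have hdeg_le := Polynomial.natDegree_le_iff_coeff_eq_zero.mpr fun k hk =>
    coeff_qPoly_sub_X_mul_eq_zero (t := t) hk
  exact ⟨Polynomial.natDegree_eq_of_le_of_coeff_ne_zero hdeg_le
    (coeff_qPoly_sub_X_mul_pos le_rfl).ne', fun k hk => coeff_qPoly_sub_X_mul_pos hk⟩
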